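/- Let d ≥ 2 and for 1 ≤ i ≤ d+1 let V_i = {v_{i,j} : 1 ≤ j ≤ d} be a collection of d+1 pairwise mutually unbiased orthonormal bases of ℂ^d, and set P_{i,j} = v_{i,j} v_{i,j}*. Then the set of d² matrices {P_{1,j} : 1 ≤ j ≤ d} ∪ {P_{i,j} : 2 ≤ i ≤ d+1, 1 ≤ j ≤ d−1} is a basis of M_d(ℂ). -/

import Mathlib

/-!
In the trace pairing, `tr (P_{i,j} P_{k,l})` is `δ_{j,l}` within one basis and `1/d` across
two bases. So if `∑ c_{i,j} P_{i,j} = 0`, pairing with `P_{k,l}` gives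
`c_{k,l} = -(1/d) ∑_{i ≠ k} ∑_j c_{i,j}`, which does not depend on `l`. For every basis but
the first, the family omits the last projection, whose coefficient is therefore `0`; hence the
whole row vanishes, and then so does the right-hand side for the first basis. Finally, `d²`
independent matrices span the `d²`-dimensional space `M_d(ℂ)`.
-/

open Matrix

/-- The rank-one matrix `x y*` with entries `(x y*)_{k,l} = x_k * conj (y_l)`. -/
noncomputable def outer {d : ℕ} (x y : Fin d → ℂ) : Matrix (Fin d) (Fin d) ℂ :=
  fun k l => x k * (starRingEnd ℂ) (y l)

/-- Given `d+1` bases `v i = {v i j : j}` of `ℂ^d` with associated rank-one projections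
`P_{i,j} = v_{i,j} v_{i,j}*`, the family of `d²` matrices
`{P_{1,j} : 1 ≤ j ≤ d} ∪ {P_{i,j} : 2 ≤ i ≤ d+1, 1 ≤ j ≤ d-1}`
(here the first basis is indexed by `0 : Fin (d+1)`). -/
noncomputable def mubFamily {d : ℕ} (v : Fin (d + 1) → Fin d → EuclideanSpace ℂ (Fin d)) :
    (Fin d ⊕ ({i : Fin (d + 1) // i ≠ 0} × Fin (d - 1))) → Matrix (Fin d) (Fin d) ℂ
  | Sum.inl j => outer (v 0 j) (v 0 j)
  | Sum.inr (i, j) =>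
      outer (v i.1 (Fin.castLE (Nat.sub_le d 1) j)) (v i.1 (Fin.castLE (Nat.sub_le d 1) j))

lemma trace_outer_mul_outer {d : ℕ} (x y : EuclideanSpace ℂ (Fin d)) :
    trace (outer x x * outer y y) = (‖(inner ℂ x y : ℂ)‖ : ℂ) ^ 2 := by
  rw [← Complex.conj_mul']
  simp only [trace, diag, mul_apply, outer, PiLp.inner_apply, RCLike.inner_apply, map_sum,
    _root_.map_mul, Finset.sum_mul_sum, Complex.conj_conj]
  exact Finset.sum_congr rfl fun k _ => Finset.sum_congr rfl fun l _ => by ring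

section Projections

variable {ι : Type*} [DecidableEq ι] {d : ℕ}
  {v : ι → Fin d → EuclideanSpace ℂ (Fin d)}

noncomputable def projections (v : ι → Fin d → EuclideanSpace ℂ (Fin d)) (p : ι × Fin d) :
    Matrix (Fin d) (Fin d) ℂ :=
  outer (v p.1 p.2) (v p.1 p.2)

variable (horth : ∀ i, Orthonormal ℂ (v i))
  (hmub : ∀ i k, i ≠ k → ∀ j l, ‖(inner ℂ (v i j) (v k l) : ℂ)‖ ^ 2 = 1 / d)
include horth hmub

lemma trace_projections_mul_projections (p q : ι × Fin d) :
    trace (projections v p * projections v q) =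
      (if p = q then 1 else 0) + if p.1 = q.1 then 0 else (d : ℂ)⁻¹ := by
  obtain ⟨i, j⟩ := p
  obtain ⟨k, l⟩ := q
  rw [projections, projections, trace_outer_mul_outer]
  by_cases hik : i = k
  · subst hik
    rw [orthonormal_iff_ite.mp (horth i) j l]
    by_cases hjl : j = l <;> simp [hjl]
  · rw [← Complex.ofReal_pow, hmub i k hik j l]
    simp [hik]

lemma trace_sum_smul_projections_mul [Fintype ι] (c : ι × Fin d → ℂ) (q : ι × Fin d) :
    trace ((∑ p, c p • projections v p) * projections v q) =
      c q + (∑ p with p.1 ≠ q.1, c p) / d := by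
  simp only [Finset.sum_mul, smul_mul_assoc, trace_sum, trace_smul, smul_eq_mul,
    trace_projections_mul_projections horth hmub, mul_add, Finset.sum_add_distrib, mul_ite,
    mul_one, mul_zero, Finset.sum_ite_eq', Finset.mem_univ, if_true, Finset.sum_div]
  rw [Finset.sum_filter]
  simp only [ite_not, div_eq_mul_inv]

lemma eq_neg_sum_div_of_sum_smul_projections_eq_zero [Fintype ι] {c : ι × Fin d → ℂ}
    (hc : ∑ p, c p • projections v p = 0) (q : ι × Fin d) :
    c q = -(∑ p with p.1 ≠ q.1, c p) / d := by
  have h := trace_sum_smul_projections_mul horth hmub c q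
  rw [hc, Matrix.zero_mul, trace_zero] at h
  linear_combination -h

theorem linearIndepOn_projections [Fintype ι] (i₀ : ι) (j₀ : Fin d) :
    LinearIndepOn ℂ (projections v) {p | p.1 = i₀ ∨ p.2 ≠ j₀} := by
  rw [linearIndepOn_iff]
  intro c hsupp hcomb
  rw [Finsupp.mem_supported'] at hsupp
  rw [Finsupp.linearCombination_apply, Finsupp.sum_fintype _ _ (by simp)] at hcomb
  have hcoeff := eq_neg_sum_div_of_sum_smul_projections_eq_zero horth hmub hcomb
  have hrow : ∀ i, i ≠ i₀ → ∀ j, c (i, j) = 0 := fun i hi j => by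
    rw [hcoeff, ← hcoeff (i, j₀), hsupp _ (by simp [hi])]
  ext ⟨i, j⟩
  by_cases hi : i = i₀
  · subst hi
    rw [hcoeff, Finset.sum_eq_zero fun p hp => hrow _ (Finset.mem_filter.mp hp).2 _]
    simp
  · exact hrow i hi j

end Projections

def mubIndex {d : ℕ} :
    Fin d ⊕ ({i : Fin (d + 1) // i ≠ 0} × Fin (d - 1)) → Fin (d + 1) × Fin d
  | Sum.inl j => (0, j)
  | Sum.inr (i, j) => (i.1, Fin.castLE (Nat.sub_le d 1) j)

lemma mubFamily_eq_projections_comp {d : ℕ}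
    (v : Fin (d + 1) → Fin d → EuclideanSpace ℂ (Fin d)) :
    mubFamily v = projections v ∘ mubIndex := by
  ext (j | ⟨i, j⟩) : 1 <;> rfl

lemma mubIndex_injective {d : ℕ} : Function.Injective (mubIndex (d := d)) := by
  rintro (j | ⟨i, j⟩) (j' | ⟨i', j'⟩) h <;> obtain ⟨hi, hj⟩ := Prod.ext_iff.mp h
  · rw [show j = j' from hj]
  · exact absurd hi.symm i'.2
  · exact absurd hi i.2
  · rw [Subtype.ext hi, Fin.castLE_injective (Nat.sub_le d 1) hj]

lemma range_mubIndex_subset {d : ℕ} (hd : 1 ≤ d) :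
    Set.range (mubIndex (d := d)) ⊆ {p | p.1 = 0 ∨ p.2 ≠ ⟨d - 1, by omega⟩} := by
  rintro _ ⟨j | ⟨i, j⟩, rfl⟩
  · simp [mubIndex]
  · refine Or.inr (Fin.ne_of_val_ne ?_)
    simp only [mubIndex, Fin.val_castLE]
    omega

theorem mub_projections_basis {d : ℕ} (hd : 2 ≤ d)
    (v : Fin (d + 1) → Fin d → EuclideanSpace ℂ (Fin d))
    (horth : ∀ i, Orthonormal ℂ (v i))
    (hmub : ∀ i k, i ≠ k → ∀ j l, ‖(inner ℂ (v i j) (v k l) : ℂ)‖ ^ 2 = 1 / d) :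
    LinearIndependent ℂ (mubFamily v) ∧
    Submodule.span ℂ (Set.range (mubFamily v)) = ⊤ := by
  have hli : LinearIndependent ℂ (mubFamily v) := by
    rw [mubFamily_eq_projections_comp, ← linearIndepOn_range_iff mubIndex_injective]
    exact (linearIndepOn_projections horth hmub _ _).mono (range_mubIndex_subset (by omega))
  refine ⟨hli, hli.span_eq_top_of_card_eq_finrank' ?_⟩
  simp only [Fintype.card_sum, Fintype.card_prod, Fintype.card_fin, ne_eq,
    Fintype.card_subtype_compl, Fintype.card_unique, add_tsub_cancel_right,
    Module.finrank_matrix, Module.finrank_self, mul_one]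
  rw [Nat.mul_sub_one, Nat.add_sub_cancel' (Nat.le_mul_self d)]
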